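/- arXiv:2303.16998 — 3 statements merged into one kernel-verified Lean document; each statement's English description precedes it below -/
import Mathlib

section
/- Let Z = P·X·Q·Y where P, Q are independent Bernoulli random variables taking value 1 with probability s/d and 0 otherwise, and X, Y are independent Gaussian N(0, 1/s) random variables, all mutually independent, with s = c|λ| for some c > 1. Then E[exp(λZ)] ≤ exp(c³λ²/(d²√(c² - 1))). -/
/-!
Write the product as `W * W'` with `W = P * X` and `W' = Q * Y`. These are independent and each
has law `p • N(0, v) + (1 - p) • δ₀`, where `p = s / d` and `v = 1 / s`. Integrating out `W'`
with the Gaussian mgf gives `𝔼[exp (t W W') | W] = p * exp (v t² W² / 2) + 1 - p`, and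
integrating out `W` with `𝔼[exp (a X²)] = (1 - 2 a v)^(-1/2)` gives the exact value
`𝔼[exp (t W W')] = 1 + p² ((1 - t² v²)^(-1/2) - 1)`. For `t = λ` we have `t² v² = 1 / c²`, so
the value is `1 + p² (c / √(c² - 1) - 1) ≤ exp (p² c / √(c² - 1))`, and `p² c = c³ λ² / d²`.
-/

open MeasureTheory ProbabilityTheory Real
open scoped NNReal ENNReal

lemma lintegral_exp_mul_gaussianReal (m : ℝ) (v : ℝ≥0) (t : ℝ) :
    ∫⁻ x, ENNReal.ofReal (exp (t * x)) ∂gaussianReal m v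
      = ENNReal.ofReal (exp (m * t + v * t ^ 2 / 2)) := by
  rw [← ofReal_integral_eq_lintegral_ofReal (integrable_exp_mul_gaussianReal t)
    (ae_of_all _ fun _ ↦ (exp_pos _).le), ← congrFun mgf_fun_id_gaussianReal t]
  rfl

lemma lintegral_exp_mul_sq_gaussianReal {v : ℝ≥0} (hv : v ≠ 0) {t : ℝ} (ht : 2 * t * v < 1) :
    ∫⁻ x, ENNReal.ofReal (exp (t * x ^ 2)) ∂gaussianReal 0 v
      = ENNReal.ofReal (√(1 - 2 * t * v))⁻¹ := by
  have hv0 : (0 : ℝ) < v := by positivity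
  set b := (1 - 2 * t * v) / (2 * v) with hb
  have hb0 : 0 < b := div_pos (by linarith) (by positivity)
  have hdens : ∀ x, gaussianPDFReal 0 v x * exp (t * x ^ 2)
      = (√(2 * π * v))⁻¹ * exp (-b * x ^ 2) := by
    intro x
    rw [gaussianPDFReal, mul_assoc, ← exp_add, hb]
    congr 2
    field_simp
    ring
  rw [gaussianReal_of_var_ne_zero _ hv, lintegral_withDensity_eq_lintegral_mul₀
    (measurable_gaussianPDF 0 v).aemeasurable (by fun_prop)]
  simp only [Pi.mul_apply, gaussianPDF, ← ENNReal.ofReal_mul (gaussianPDFReal_nonneg _ _ _),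
    hdens]
  rw [← ofReal_integral_eq_lintegral_ofReal ((integrable_exp_neg_mul_sq hb0).const_mul _)
    (ae_of_all _ fun _ ↦ by positivity), integral_const_mul, integral_gaussian]
  congr 1
  rw [hb, ← sqrt_inv, ← sqrt_inv, ← sqrt_mul (by positivity)]
  congr 1
  field_simp

/-- The law of `B * W` for `B ~ Bernoulli p` independent of `W ~ ν`; for `ν = δ₁` it is the
Bernoulli law itself. -/
noncomputable def zeroInflated (p : ℝ) (ν : Measure ℝ) : Measure ℝ :=
  ENNReal.ofReal p • ν + ENNReal.ofReal (1 - p) • Measure.dirac 0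

section ZeroInflated

variable {p : ℝ} {ν : Measure ℝ}

lemma isProbabilityMeasure_zeroInflated (hp0 : 0 ≤ p) (hp1 : p ≤ 1) [IsProbabilityMeasure ν] :
    IsProbabilityMeasure (zeroInflated p ν) := by
  constructor
  simp [zeroInflated, ← ENNReal.ofReal_add hp0 (sub_nonneg.2 hp1)]

lemma lintegral_zeroInflated (f : ℝ → ℝ≥0∞) :
    ∫⁻ x, f x ∂zeroInflated p ν
      = ENNReal.ofReal p * ∫⁻ x, f x ∂ν + ENNReal.ofReal (1 - p) * f 0 := by
  simp [zeroInflated, lintegral_add_measure]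

lemma map_mul_eq_zeroInflated {Ω : Type*} [MeasurableSpace Ω] {μ : Measure Ω}
    [IsFiniteMeasure μ] {P X : Ω → ℝ} [IsProbabilityMeasure ν] (hPm : AEMeasurable P μ)
    (hXm : AEMeasurable X μ) (hPX : IndepFun P X μ)
    (hP : μ.map P = zeroInflated p (Measure.dirac 1)) (hX : μ.map X = ν) :
    μ.map (P * X) = zeroInflated p ν := by
  have hprod : μ.map (P * X)
      = ((zeroInflated p (Measure.dirac 1)).prod ν).map (fun z ↦ z.1 * z.2) := by
    rw [← hP, ← hX, ← (indepFun_iff_map_prod_eq_prod_map_map hPm hXm).1 hPX,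
      AEMeasurable.map_map_of_aemeasurable (by fun_prop) (hPm.prodMk hXm)]
    rfl
  rw [hprod, zeroInflated, Measure.add_prod, Measure.prod_smul_left, Measure.prod_smul_left,
    Measure.dirac_prod, Measure.dirac_prod, Measure.map_add _ _ (by fun_prop),
    Measure.map_smul, Measure.map_smul, Measure.map_map (by fun_prop) (by fun_prop),
    Measure.map_map (by fun_prop) (by fun_prop)]
  simp [Function.comp_def, Measure.map_const, zeroInflated]

end ZeroInflated

lemma ProbabilityTheory.IndepFun.lintegral_comp_eq_lintegral_lintegral_map {Ω β γ : Type*}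
    [MeasurableSpace Ω] [MeasurableSpace β] [MeasurableSpace γ] {μ : Measure Ω}
    [IsFiniteMeasure μ] {f : Ω → β} {g : Ω → γ} (hf : AEMeasurable f μ)
    (hg : AEMeasurable g μ) (hfg : IndepFun f g μ) {F : β × γ → ℝ≥0∞} (hF : Measurable F) :
    ∫⁻ ω, F (f ω, g ω) ∂μ = ∫⁻ x, ∫⁻ y, F (x, y) ∂μ.map g ∂μ.map f := by
  rw [← lintegral_prod _ hF.aemeasurable,
    ← (indepFun_iff_map_prod_eq_prod_map_map hf hg).1 hfg,
    lintegral_map' hF.aemeasurable (hf.prodMk hg)]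

lemma lintegral_exp_mul_mul_zeroInflated_gaussianReal {p t : ℝ} {v : ℝ≥0} (hp0 : 0 ≤ p)
    (hp1 : p ≤ 1) (hv : v ≠ 0) (ht : (t * v) ^ 2 < 1) :
    ∫⁻ x, ∫⁻ y, ENNReal.ofReal (exp (t * (x * y))) ∂zeroInflated p (gaussianReal 0 v)
        ∂zeroInflated p (gaussianReal 0 v)
      = ENNReal.ofReal (1 + p ^ 2 * ((√(1 - (t * v) ^ 2))⁻¹ - 1)) := by
  have hinner : ∀ x, ∫⁻ y, ENNReal.ofReal (exp (t * (x * y))) ∂zeroInflated p (gaussianReal 0 v)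
      = ENNReal.ofReal p * ENNReal.ofReal (exp (v * t ^ 2 / 2 * x ^ 2))
        + ENNReal.ofReal (1 - p) := by
    intro x
    simp only [lintegral_zeroInflated, ← mul_assoc, lintegral_exp_mul_gaussianReal, mul_zero,
      zero_mul, zero_add, exp_zero, ENNReal.ofReal_one, mul_one]
    ring_nf
  have hvt : 2 * (v * t ^ 2 / 2) * v = (t * v) ^ 2 := by ring
  have hq : 0 ≤ 1 - p := sub_nonneg.2 hp1
  simp only [hinner, lintegral_zeroInflated]
  rw [lintegral_add_right _ measurable_const, lintegral_const_mul _ (by fun_prop),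
    lintegral_exp_mul_sq_gaussianReal hv (hvt ▸ ht), hvt, lintegral_const, measure_univ]
  simp only [ne_eq, OfNat.ofNat_ne_zero, not_false_eq_true, zero_pow, mul_zero, exp_zero,
    ENNReal.ofReal_one, mul_one]
  rw [← ENNReal.ofReal_mul hp0, ← ENNReal.ofReal_add (by positivity) hq,
    ← ENNReal.ofReal_mul hp0, ← ENNReal.ofReal_add hp0 hq, ← ENNReal.ofReal_mul hq,
    ← ENNReal.ofReal_add (by positivity) (by positivity)]
  ring_nf

lemma mgf_mul_of_indepFun_zeroInflated_gaussianReal {Ω : Type*} [MeasurableSpace Ω]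
    {μ : Measure Ω} [IsProbabilityMeasure μ] {W W' : Ω → ℝ} {p t : ℝ} {v : ℝ≥0}
    (hp0 : 0 ≤ p) (hp1 : p ≤ 1) (hv : v ≠ 0) (ht : (t * v) ^ 2 < 1)
    (hW : μ.map W = zeroInflated p (gaussianReal 0 v))
    (hW' : μ.map W' = zeroInflated p (gaussianReal 0 v)) (hind : IndepFun W W' μ) :
    mgf (W * W') μ t = 1 + p ^ 2 * ((√(1 - (t * v) ^ 2))⁻¹ - 1) := by
  have hZ := isProbabilityMeasure_zeroInflated (ν := gaussianReal 0 v) hp0 hp1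
  have hWm : AEMeasurable W μ := aemeasurable_of_map_neZero (by rw [hW]; infer_instance)
  have hW'm : AEMeasurable W' μ := aemeasurable_of_map_neZero (by rw [hW']; infer_instance)
  have hlint := hind.lintegral_comp_eq_lintegral_lintegral_map hWm hW'm
    (F := fun z ↦ ENNReal.ofReal (exp (t * (z.1 * z.2)))) (by fun_prop)
  rw [hW, hW', lintegral_exp_mul_mul_zeroInflated_gaussianReal hp0 hp1 hv ht] at hlint
  have hK : 0 ≤ (√(1 - (t * v) ^ 2))⁻¹ := by positivity
  rw [mgf, integral_eq_lintegral_of_nonneg_ae (ae_of_all _ fun _ ↦ (exp_pos _).le)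
    (by fun_prop : AEMeasurable _ μ).aestronglyMeasurable]
  simp only [Pi.mul_apply, hlint]
  exact ENNReal.toReal_ofReal (by nlinarith [sq_nonneg p])

lemma inv_sqrt_one_sub_inv_sq {c : ℝ} (hc : 0 < c) :
    (√(1 - (c ^ 2)⁻¹))⁻¹ = c / √(c ^ 2 - 1) := by
  rw [show 1 - (c ^ 2)⁻¹ = (c ^ 2 - 1) / c ^ 2 by field_simp, sqrt_div' _ (sq_nonneg c),
    sqrt_sq hc.le, inv_div]

theorem stmt2_general {Ω : Type*} [MeasurableSpace Ω] (μ : Measure Ω) [IsProbabilityMeasure μ]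
    (P X Q Y : Ω → ℝ) (s d c lam : ℝ)
    (hs : 0 < s) (hsd : s ≤ d) (hc : 1 < c) (hsc : s = c * |lam|)
    (hP : Measure.map P μ =
      ENNReal.ofReal (s / d) • Measure.dirac (1 : ℝ) +
        ENNReal.ofReal (1 - s / d) • Measure.dirac (0 : ℝ))
    (hQ : Measure.map Q μ =
      ENNReal.ofReal (s / d) • Measure.dirac (1 : ℝ) +
        ENNReal.ofReal (1 - s / d) • Measure.dirac (0 : ℝ))
    (hX : Measure.map X μ = gaussianReal 0 (Real.toNNReal (1 / s)))
    (hY : Measure.map Y μ = gaussianReal 0 (Real.toNNReal (1 / s)))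
    (hindep : iIndepFun ![P, X, Q, Y] μ) :
    ∫ ω, Real.exp (lam * (P ω * X ω * Q ω * Y ω)) ∂μ ≤
      Real.exp (c ^ 3 * lam ^ 2 / (d ^ 2 * Real.sqrt (c ^ 2 - 1))) := by
  set p := s / d
  set v := (1 / s).toNNReal
  have hd : 0 < d := hs.trans_le hsd
  have hp0 : 0 ≤ p := div_nonneg hs.le hd.le
  have hp1 : p ≤ 1 := div_le_one_of_le₀ hsd hd.le
  have hlv : (lam * v) ^ 2 = (c ^ 2)⁻¹ := by
    refine eq_inv_of_mul_eq_one_left ?_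
    rw [coe_toNNReal _ (by positivity)]
    field_simp
    rw [hsc, mul_pow, sq_abs, mul_comm]
  have hB := isProbabilityMeasure_zeroInflated (ν := Measure.dirac 1) hp0 hp1
  have hm : ∀ i, AEMeasurable (![P, X, Q, Y] i) μ := fun i ↦ aemeasurable_of_map_neZero (by
    fin_cases i <;>
      simp only [Fin.zero_eta, Fin.mk_one, Fin.reduceFinMk, Matrix.cons_val, hP, hX, hQ, hY]
    all_goals first | exact hB.neZero | infer_instance)
  have hmgf := mgf_mul_of_indepFun_zeroInflated_gaussianReal (W := P * X) (W' := Q * Y)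
    hp0 hp1 (by simpa [v] using hs) (hlv ▸ inv_lt_one_of_one_lt₀ (by nlinarith))
    (map_mul_eq_zeroInflated (hm 0) (hm 1) (hindep.indepFun (i := 0) (j := 1) (by decide)) hP hX)
    (map_mul_eq_zeroInflated (hm 2) (hm 3) (hindep.indepFun (i := 2) (j := 3) (by decide)) hQ hY)
    (hindep.indepFun_mul_mul₀ hm 0 1 2 3 (by decide) (by decide) (by decide) (by decide))
  rw [hlv, inv_sqrt_one_sub_inv_sq (by linarith)] at hmgf
  calc ∫ ω, exp (lam * (P ω * X ω * Q ω * Y ω)) ∂μ = mgf (P * X * (Q * Y)) μ lam := by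
        simp only [mgf, Pi.mul_apply, mul_assoc]
    _ ≤ exp (p ^ 2 * (c / √(c ^ 2 - 1) - 1)) := by
        rw [hmgf, add_comm]
        exact add_one_le_exp _
    _ ≤ exp (p ^ 2 * (c / √(c ^ 2 - 1))) := exp_le_exp.2 (by nlinarith [sq_nonneg p])
    _ = exp (c ^ 3 * lam ^ 2 / (d ^ 2 * √(c ^ 2 - 1))) := by
        rw [show p = s / d from rfl, hsc, div_pow, mul_pow, sq_abs]
        field_simp

theorem stmt2 {Ω : Type*} [MeasurableSpace Ω] (μ : Measure Ω) [IsProbabilityMeasure μ]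
    (P X Q Y : Ω → ℝ) (s d c lam : ℝ)
    (hs : 0 < s) (hsd : s ≤ d) (hc : 1 < c) (hlam : |lam| < s) (hsc : s = c * |lam|)
    (hP : Measure.map P μ =
      ENNReal.ofReal (s / d) • Measure.dirac (1 : ℝ) +
        ENNReal.ofReal (1 - s / d) • Measure.dirac (0 : ℝ))
    (hQ : Measure.map Q μ =
      ENNReal.ofReal (s / d) • Measure.dirac (1 : ℝ) +
        ENNReal.ofReal (1 - s / d) • Measure.dirac (0 : ℝ))
    (hX : Measure.map X μ = gaussianReal 0 (Real.toNNReal (1 / s)))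
    (hY : Measure.map Y μ = gaussianReal 0 (Real.toNNReal (1 / s)))
    (hindep : iIndepFun ![P, X, Q, Y] μ) :
    ∫ ω, Real.exp (lam * (P ω * X ω * Q ω * Y ω)) ∂μ ≤
      Real.exp (c ^ 3 * lam ^ 2 / (d ^ 2 * Real.sqrt (c ^ 2 - 1))) :=
  stmt2_general μ P X Q Y s d c lam hs hsd hc hsc hP hQ hX hY hindep
end

section
/- Let ρ be a probability distribution on a finite set A of vectors in ℝ^s, with G(ρ) = Σ_{a∈A} ρ(a)·a·aᵀ invertible and g(ρ) = max_{a∈A} ‖a‖²_{G(ρ)⁻¹} ≤ 2s. Suppose rewards satisfy r_a = ⟨a, θ*⟩ + ν_a with |ν_a| ≤ ε for all a ∈ A, and define the estimator θ̂ = G(ρ)⁻¹ Σ_{a∈A} ρ(a)·r_a·a. Then for every b ∈ A, |⟨b, θ̂⟩ - ⟨b, θ*⟩| ≤ ε√(2s). -/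
open Matrix

lemma dot_sum_aux {s : ℕ} (A : Finset (Fin s → ℝ)) (x : Fin s → ℝ)
    (f : (Fin s → ℝ) → (Fin s → ℝ)) :
    x ⬝ᵥ (∑ a ∈ A, f a) = ∑ a ∈ A, x ⬝ᵥ f a := by
  simp only [dotProduct, Finset.sum_apply, Finset.mul_sum]
  exact Finset.sum_comm

lemma sum_mulVec_aux {s : ℕ} (A : Finset (Fin s → ℝ))
    (M : (Fin s → ℝ) → Matrix (Fin s) (Fin s) ℝ) (v : Fin s → ℝ) :
    (∑ a ∈ A, M a) *ᵥ v = ∑ a ∈ A, (M a) *ᵥ v := by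
  ext i
  simp only [Matrix.mulVec, dotProduct, Finset.sum_apply, Matrix.sum_apply, Finset.sum_mul]
  exact Finset.sum_comm

lemma vecMulVec_mulVec_aux {s : ℕ} (a v : Fin s → ℝ) :
    (Matrix.vecMulVec a a) *ᵥ v = (a ⬝ᵥ v) • a := by
  ext i
  simp only [Matrix.mulVec, Matrix.vecMulVec_apply, dotProduct, Pi.smul_apply, smul_eq_mul,
    Finset.sum_mul]
  refine Finset.sum_congr rfl fun j _ => ?_
  ring

theorem stmt12 (s : ℕ) (A : Finset (Fin s → ℝ)) (ρ : (Fin s → ℝ) → ℝ)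
    (hρ0 : ∀ a ∈ A, 0 ≤ ρ a) (hρ1 : ∑ a ∈ A, ρ a = 1)
    (G : Matrix (Fin s) (Fin s) ℝ)
    (hG : G = ∑ a ∈ A, ρ a • Matrix.vecMulVec a a)
    (hGinv : IsUnit G.det)
    (hg : ∀ a ∈ A, a ⬝ᵥ (G⁻¹ *ᵥ a) ≤ 2 * s)
    (θ θhat : Fin s → ℝ) (r : (Fin s → ℝ) → ℝ) (ε : ℝ) (hε : 0 ≤ ε)
    (hr : ∀ a ∈ A, |r a - a ⬝ᵥ θ| ≤ ε)
    (hest : θhat = G⁻¹ *ᵥ ∑ a ∈ A, (ρ a * r a) • a) :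
    ∀ b ∈ A, |b ⬝ᵥ θhat - b ⬝ᵥ θ| ≤ ε * Real.sqrt (2 * s) := by
  intro b hb
  have hGsym : Gᵀ = G := by
    rw [hG, Matrix.transpose_sum]
    refine Finset.sum_congr rfl fun a _ => ?_
    rw [Matrix.transpose_smul]
    congr 1
    ext i j
    simp [Matrix.vecMulVec, mul_comm]
  have hKsym : G⁻¹ᵀ = G⁻¹ := by rw [Matrix.transpose_nonsing_inv, hGsym]
  set x : Fin s → ℝ := G⁻¹ *ᵥ b with hx
  -- b ⬝ᵥ (G⁻¹ *ᵥ v) = x ⬝ᵥ v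
  have hdot : ∀ v : Fin s → ℝ, b ⬝ᵥ (G⁻¹ *ᵥ v) = x ⬝ᵥ v := by
    intro v
    rw [dotProduct_mulVec, hx, ← Matrix.mulVec_transpose, hKsym]
  -- G *ᵥ θ
  have hGθ : G *ᵥ θ = ∑ a ∈ A, (ρ a * (a ⬝ᵥ θ)) • a := by
    rw [hG, sum_mulVec_aux]
    refine Finset.sum_congr rfl fun a _ => ?_
    rw [Matrix.smul_mulVec, vecMulVec_mulVec_aux, smul_smul]
  have hθ : θ = G⁻¹ *ᵥ (G *ᵥ θ) := by
    rw [Matrix.mulVec_mulVec, Matrix.nonsing_inv_mul G hGinv, Matrix.one_mulVec]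
  -- the key expansion
  have hkey : b ⬝ᵥ θhat - b ⬝ᵥ θ = ∑ a ∈ A, ρ a * (r a - a ⬝ᵥ θ) * (x ⬝ᵥ a) := by
    conv_lhs => rw [hest, hθ, hGθ, hdot, hdot, dot_sum_aux, dot_sum_aux,
      ← Finset.sum_sub_distrib]
    refine Finset.sum_congr rfl fun a _ => ?_
    rw [dotProduct_smul, dotProduct_smul]
    simp [smul_eq_mul]
    ring
  -- quadratic form bound
  have hquad : ∑ a ∈ A, ρ a * (x ⬝ᵥ a) ^ 2 ≤ 2 * s := by
    have h1 : ∑ a ∈ A, ρ a * (x ⬝ᵥ a) ^ 2 = x ⬝ᵥ (G *ᵥ x) := by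
      have hGx : G *ᵥ x = ∑ a ∈ A, (ρ a * (a ⬝ᵥ x)) • a := by
        rw [hG, sum_mulVec_aux]
        refine Finset.sum_congr rfl fun a _ => ?_
        rw [Matrix.smul_mulVec, vecMulVec_mulVec_aux, smul_smul]
      rw [hGx, dot_sum_aux]
      refine Finset.sum_congr rfl fun a _ => ?_
      rw [dotProduct_smul, dotProduct_comm a x]
      simp [smul_eq_mul]
      ring
    have h2 : G *ᵥ x = b := by
      rw [hx, Matrix.mulVec_mulVec, Matrix.mul_nonsing_inv G hGinv, Matrix.one_mulVec]
    rw [h1, h2, dotProduct_comm]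
    exact hg b hb
  -- Cauchy-Schwarz
  have hCS : (∑ a ∈ A, ρ a * |x ⬝ᵥ a|) ^ 2 ≤ ∑ a ∈ A, ρ a * (x ⬝ᵥ a) ^ 2 := by
    have := Finset.sum_mul_sq_le_sq_mul_sq A (fun a => Real.sqrt (ρ a))
      (fun a => Real.sqrt (ρ a) * |x ⬝ᵥ a|)
    have e1 : ∀ a ∈ A, Real.sqrt (ρ a) * (Real.sqrt (ρ a) * |x ⬝ᵥ a|) = ρ a * |x ⬝ᵥ a| := by
      intro a ha
      rw [← mul_assoc, Real.mul_self_sqrt (hρ0 a ha)]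
    have e2 : ∀ a ∈ A, Real.sqrt (ρ a) ^ 2 = ρ a := fun a ha => Real.sq_sqrt (hρ0 a ha)
    have e3 : ∀ a ∈ A, (Real.sqrt (ρ a) * |x ⬝ᵥ a|) ^ 2 = ρ a * (x ⬝ᵥ a) ^ 2 := by
      intro a ha
      rw [mul_pow, Real.sq_sqrt (hρ0 a ha), sq_abs]
    rw [Finset.sum_congr rfl e1, Finset.sum_congr rfl e2, Finset.sum_congr rfl e3, hρ1,
      one_mul] at this
    exact this
  have hsum_nonneg : 0 ≤ ∑ a ∈ A, ρ a * |x ⬝ᵥ a| :=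
    Finset.sum_nonneg fun a ha => mul_nonneg (hρ0 a ha) (abs_nonneg _)
  have hsum_le : ∑ a ∈ A, ρ a * |x ⬝ᵥ a| ≤ Real.sqrt (2 * s) := by
    rw [show (∑ a ∈ A, ρ a * |x ⬝ᵥ a|) = Real.sqrt ((∑ a ∈ A, ρ a * |x ⬝ᵥ a|) ^ 2) by
      rw [Real.sqrt_sq hsum_nonneg]]
    exact Real.sqrt_le_sqrt (hCS.trans hquad)
  calc |b ⬝ᵥ θhat - b ⬝ᵥ θ| ≤ ∑ a ∈ A, ε * (ρ a * |x ⬝ᵥ a|) := by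
        rw [hkey]
        refine (Finset.abs_sum_le_sum_abs _ _).trans (Finset.sum_le_sum fun a ha => ?_)
        rw [abs_mul, abs_mul, abs_of_nonneg (hρ0 a ha)]
        calc ρ a * |r a - a ⬝ᵥ θ| * |x ⬝ᵥ a| ≤ ρ a * ε * |x ⬝ᵥ a| := by
              apply mul_le_mul_of_nonneg_right _ (abs_nonneg _)
              exact mul_le_mul_of_nonneg_left (hr a ha) (hρ0 a ha)
          _ = ε * (ρ a * |x ⬝ᵥ a|) := by ring
    _ = ε * ∑ a ∈ A, ρ a * |x ⬝ᵥ a| := by rw [Finset.mul_sum]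
    _ ≤ ε * Real.sqrt (2 * s) := mul_le_mul_of_nonneg_left hsum_le hε
end

section
/- Let M' ⊆ [d] with |M'| ≤ 2s, let ρ be a probability distribution on the restricted action set {a_{M'}} with G = Σ_a ρ(a)·a_{M'}a_{M'}ᵀ invertible and max_a ‖a_{M'}‖²_{G⁻¹} ≤ 2·(2s). Suppose θ̂, θ* ∈ ℝ^d are supported on M' and |⟨a_{M'}, θ̂_{M'}⟩ - ⟨a_{M'}, θ*_{M'}⟩| ≤ E for every a in the support of ρ. Then for every vector b, |⟨b_{M'}, θ̂_{M'}⟩ - ⟨b_{M'}, θ*_{M'}⟩| ≤ E·√(‖b_{M'}‖²_{G⁻¹}) ≤ E·2√s. -/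
open Matrix

private lemma dot_sum' {m : ℕ} (x : Fin m → ℝ) (A : Finset (Fin m → ℝ))
    (f : (Fin m → ℝ) → Fin m → ℝ) :
    x ⬝ᵥ (∑ a ∈ A, f a) = ∑ a ∈ A, x ⬝ᵥ f a := by
  simp only [dotProduct, Finset.sum_apply, Finset.mul_sum]
  exact Finset.sum_comm

private lemma gmul' {m : ℕ} (A : Finset (Fin m → ℝ)) (ρ : (Fin m → ℝ) → ℝ) (w : Fin m → ℝ) :
    (∑ a ∈ A, ρ a • Matrix.vecMulVec a a) *ᵥ w = ∑ a ∈ A, (ρ a * (a ⬝ᵥ w)) • a := by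
  ext i
  simp only [Matrix.mulVec, dotProduct, Matrix.sum_apply, Matrix.smul_apply,
    Matrix.vecMulVec_apply, smul_eq_mul, Finset.sum_apply, Pi.smul_apply, Finset.sum_mul]
  rw [Finset.sum_comm (s := (Finset.univ : Finset (Fin m))) (t := A)
    (f := fun j a => ρ a * (a i * a j) * w j)]
  refine Finset.sum_congr rfl fun a _ => ?_
  rw [Finset.mul_sum, Finset.sum_mul]
  refine Finset.sum_congr rfl fun j _ => ?_
  ring

theorem stmt19 (s m : ℕ) (hm : m ≤ 2 * s) (A : Finset (Fin m → ℝ))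
    (ρ : (Fin m → ℝ) → ℝ)
    (hρ0 : ∀ a ∈ A, 0 ≤ ρ a) (hρ1 : ∑ a ∈ A, ρ a = 1)
    (G : Matrix (Fin m) (Fin m) ℝ)
    (hG : G = ∑ a ∈ A, ρ a • Matrix.vecMulVec a a)
    (hGd : IsUnit G.det)
    (hg : ∀ a ∈ A, a ⬝ᵥ (G⁻¹ *ᵥ a) ≤ 2 * (2 * s))
    (θhat θ : Fin m → ℝ) (E : ℝ) (hE : 0 ≤ E)
    (hsupp : ∀ a ∈ A, ρ a ≠ 0 → |a ⬝ᵥ θhat - a ⬝ᵥ θ| ≤ E) :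
    ∀ b ∈ A, |b ⬝ᵥ θhat - b ⬝ᵥ θ| ≤ E * Real.sqrt (b ⬝ᵥ (G⁻¹ *ᵥ b)) ∧
      E * Real.sqrt (b ⬝ᵥ (G⁻¹ *ᵥ b)) ≤ E * (2 * Real.sqrt s) := by
  intro b hb
  have hGsymm : Gᵀ = G := by
    rw [hG, Matrix.transpose_sum]
    refine Finset.sum_congr rfl fun a _ => ?_
    rw [Matrix.transpose_smul]
    congr 1
    ext i j
    simp [Matrix.vecMulVec_apply, mul_comm]
  have hGinvsymm : G⁻¹ᵀ = G⁻¹ := by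
    rw [Matrix.transpose_nonsing_inv, hGsymm]
  set v : Fin m → ℝ := θhat - θ with hv
  set u : Fin m → ℝ := G⁻¹ *ᵥ b with hu
  have hGmul : ∀ w : Fin m → ℝ, G *ᵥ w = ∑ a ∈ A, (ρ a * (a ⬝ᵥ w)) • a := by
    intro w; rw [hG]; exact gmul' A ρ w
  have hGu : G *ᵥ u = b := by
    rw [hu, Matrix.mulVec_mulVec, Matrix.mul_nonsing_inv G hGd, Matrix.one_mulVec]
  have hdp : ∀ a : Fin m → ℝ, b ⬝ᵥ (G⁻¹ *ᵥ a) = u ⬝ᵥ a := by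
    intro a
    rw [Matrix.dotProduct_mulVec, ← Matrix.mulVec_transpose, hGinvsymm]
  have hkey : b ⬝ᵥ θhat - b ⬝ᵥ θ = ∑ a ∈ A, ρ a * ((a ⬝ᵥ v) * (u ⬝ᵥ a)) := by
    have h1 : b ⬝ᵥ θhat - b ⬝ᵥ θ = b ⬝ᵥ v := by
      rw [hv]; simp [dotProduct_sub]
    have h2 : b ⬝ᵥ v = u ⬝ᵥ (G *ᵥ v) := by
      rw [← hdp (G *ᵥ v), Matrix.mulVec_mulVec, Matrix.nonsing_inv_mul G hGd,
        Matrix.one_mulVec]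
    rw [h1, h2, hGmul v, dot_sum']
    refine Finset.sum_congr rfl fun a _ => ?_
    rw [dotProduct_smul]
    simp only [smul_eq_mul]
    ring
  have hsum2 : ∑ a ∈ A, ρ a * (u ⬝ᵥ a) ^ 2 = b ⬝ᵥ (G⁻¹ *ᵥ b) := by
    have h3 : b ⬝ᵥ (G⁻¹ *ᵥ b) = u ⬝ᵥ (G *ᵥ u) := by
      rw [hGu, hdp b, dotProduct_comm]
    rw [h3, hGmul u, dot_sum']
    refine Finset.sum_congr rfl fun a _ => ?_
    rw [dotProduct_smul]
    have h4 : u ⬝ᵥ a = a ⬝ᵥ u := dotProduct_comm u a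
    simp only [smul_eq_mul, h4]
    ring
  have hq0 : 0 ≤ b ⬝ᵥ (G⁻¹ *ᵥ b) := by
    rw [← hsum2]
    exact Finset.sum_nonneg fun a ha => mul_nonneg (hρ0 a ha) (sq_nonneg _)
  have hstep1 : |b ⬝ᵥ θhat - b ⬝ᵥ θ| ≤ E * ∑ a ∈ A, ρ a * |u ⬝ᵥ a| := by
    rw [hkey]
    calc |∑ a ∈ A, ρ a * ((a ⬝ᵥ v) * (u ⬝ᵥ a))|
        ≤ ∑ a ∈ A, |ρ a * ((a ⬝ᵥ v) * (u ⬝ᵥ a))| := Finset.abs_sum_le_sum_abs _ _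
      _ ≤ ∑ a ∈ A, E * (ρ a * |u ⬝ᵥ a|) := by
          refine Finset.sum_le_sum fun a ha => ?_
          rw [abs_mul, abs_mul, abs_of_nonneg (hρ0 a ha)]
          rcases eq_or_ne (ρ a) 0 with h | h
          · simp [h]
          · have hEa : |a ⬝ᵥ v| ≤ E := by
              have := hsupp a ha h
              simpa [hv, dotProduct_sub, sub_dotProduct] using this
            calc ρ a * (|a ⬝ᵥ v| * |u ⬝ᵥ a|)
                ≤ ρ a * (E * |u ⬝ᵥ a|) := by
                  refine mul_le_mul_of_nonneg_left ?_ (hρ0 a ha)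
                  exact mul_le_mul_of_nonneg_right hEa (abs_nonneg _)
              _ = E * (ρ a * |u ⬝ᵥ a|) := by ring
      _ = E * ∑ a ∈ A, ρ a * |u ⬝ᵥ a| := by rw [Finset.mul_sum]
  have hcs : ∑ a ∈ A, ρ a * |u ⬝ᵥ a| ≤ Real.sqrt (b ⬝ᵥ (G⁻¹ *ᵥ b)) := by
    have hsq : (∑ a ∈ A, ρ a * |u ⬝ᵥ a|) ^ 2 ≤ b ⬝ᵥ (G⁻¹ *ᵥ b) := by
      have hCS := Finset.sum_mul_sq_le_sq_mul_sq A (fun a => Real.sqrt (ρ a))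
        (fun a => Real.sqrt (ρ a) * |u ⬝ᵥ a|)
      have e1 : ∀ a ∈ A, Real.sqrt (ρ a) * (Real.sqrt (ρ a) * |u ⬝ᵥ a|) = ρ a * |u ⬝ᵥ a| := by
        intro a ha
        rw [← mul_assoc, Real.mul_self_sqrt (hρ0 a ha)]
      have e2 : ∀ a ∈ A, Real.sqrt (ρ a) ^ 2 = ρ a := fun a ha => Real.sq_sqrt (hρ0 a ha)
      have e3 : ∀ a ∈ A, (Real.sqrt (ρ a) * |u ⬝ᵥ a|) ^ 2 = ρ a * (u ⬝ᵥ a) ^ 2 := by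
        intro a ha
        rw [mul_pow, Real.sq_sqrt (hρ0 a ha), sq_abs]
      rw [Finset.sum_congr rfl e1, Finset.sum_congr rfl e2, Finset.sum_congr rfl e3,
        hρ1, one_mul, hsum2] at hCS
      exact hCS
    have hnn : 0 ≤ ∑ a ∈ A, ρ a * |u ⬝ᵥ a| :=
      Finset.sum_nonneg fun a ha => mul_nonneg (hρ0 a ha) (abs_nonneg _)
    calc ∑ a ∈ A, ρ a * |u ⬝ᵥ a|
        = Real.sqrt ((∑ a ∈ A, ρ a * |u ⬝ᵥ a|) ^ 2) := by rw [Real.sqrt_sq hnn]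
      _ ≤ Real.sqrt (b ⬝ᵥ (G⁻¹ *ᵥ b)) := Real.sqrt_le_sqrt hsq
  constructor
  · calc |b ⬝ᵥ θhat - b ⬝ᵥ θ| ≤ E * ∑ a ∈ A, ρ a * |u ⬝ᵥ a| := hstep1
      _ ≤ E * Real.sqrt (b ⬝ᵥ (G⁻¹ *ᵥ b)) := mul_le_mul_of_nonneg_left hcs hE
  · refine mul_le_mul_of_nonneg_left ?_ hE
    have h4 : b ⬝ᵥ (G⁻¹ *ᵥ b) ≤ 4 * s := by
      have := hg b hb
      linarith
    calc Real.sqrt (b ⬝ᵥ (G⁻¹ *ᵥ b)) ≤ Real.sqrt (4 * s) := Real.sqrt_le_sqrt h4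
      _ = 2 * Real.sqrt s := by
          rw [Real.sqrt_mul (by norm_num : (0:ℝ) ≤ 4),
            show (4:ℝ) = 2 ^ 2 by norm_num, Real.sqrt_sq (by norm_num : (0:ℝ) ≤ 2)]
end
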